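/- arXiv:math/0105030 — 2 statements merged into one kernel-verified Lean document; each statement's English description precedes it below -/
import Mathlib

section
/- Let B be an n×m real matrix, σ ⊆ {1,…,n}, η ∈ ℕ^n, and w ∈ ℝ^n. If the polyhedron P = {y ∈ ℝ^m : (B·y)_j ≤ η_j for j ∉ σ, and −wᵀ(B·y) ≤ 0} is bounded, then the set of rows {(b_{i1},…,b_{im}) : i ∉ σ} contains a linearly independent subset of cardinality m. -/
open Matrix

/-- If the polyhedron `P = {y | (B·y)_j ≤ η_j for j ∉ σ, −wᵀ(B·y) ≤ 0}`
is bounded, then the rows of `B` indexed outside `σ` contain `m` linearly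
independent ones. -/
theorem stmt1 (n m : ℕ) (B : Matrix (Fin n) (Fin m) ℝ) (σ : Finset (Fin n))
    (η : Fin n → ℕ) (w : Fin n → ℝ)
    (hbdd : Bornology.IsBounded
      {y : Fin m → ℝ | (∀ j ∉ σ, B.mulVec y j ≤ η j) ∧ -(w ⬝ᵥ B.mulVec y) ≤ 0}) :
    ∃ T : Finset (Fin n), (∀ i ∈ T, i ∉ σ) ∧ T.card = m ∧
      LinearIndependent ℝ (fun i : T => B i.1) := by
  classical
  set s : Set (Fin m → ℝ) := B '' {i : Fin n | i ∉ σ} with hs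
  by_cases hspan : Submodule.span ℝ s = ⊤
  · -- rows span: extract a basis from s
    obtain ⟨t, hts, htspan, htli⟩ := exists_linearIndependent ℝ s
    have htfin : t.Finite := (Set.Finite.image B (Set.toFinite _)).subset hts
    have : Fintype t := htfin.fintype
    have hcard : t.toFinset.card = m := by
      have := finrank_span_set_eq_card htli
      rw [htspan, hspan, finrank_top] at this
      simpa using this.symm
    have hpre : ∀ v : t, ∃ i : Fin n, i ∉ σ ∧ B i = (v : Fin m → ℝ) := by
      rintro ⟨v, hv⟩
      obtain ⟨i, hi, hBi⟩ := hts hv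
      exact ⟨i, hi, hBi⟩
    choose g hg1 hg2 using hpre
    have ginj : Function.Injective g := by
      intro a b hab
      have : (a : Fin m → ℝ) = b := by rw [← hg2 a, ← hg2 b, hab]
      exact Subtype.ext this
    refine ⟨t.toFinset.attach.image (fun v => g ⟨v.1, Set.mem_toFinset.mp v.2⟩), ?_, ?_, ?_⟩
    · intro i hi
      simp only [Finset.mem_image] at hi
      obtain ⟨v, -, rfl⟩ := hi
      exact hg1 _
    · rw [Finset.card_image_of_injective _ (fun a b hab => Subtype.ext ?_),
        Finset.card_attach, hcard]
      have := ginj hab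
      simpa using congrArg Subtype.val this
    · set T := t.toFinset.attach.image (fun v => g ⟨v.1, Set.mem_toFinset.mp v.2⟩) with hT
      have hmem : ∀ i : T, B i.1 ∈ t := by
        rintro ⟨i, hi⟩
        simp only [hT, Finset.mem_image] at hi
        obtain ⟨v, -, rfl⟩ := hi
        rw [hg2]
        exact Set.mem_toFinset.mp v.2
      have einj : Function.Injective (fun i : T => (⟨B i.1, hmem i⟩ : t)) := by
        rintro ⟨a, ha⟩ ⟨b, hb⟩ hab
        simp only [Subtype.mk.injEq] at hab
        simp only [hT, Finset.mem_image] at ha hb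
        obtain ⟨va, -, rfl⟩ := ha
        obtain ⟨vb, -, rfl⟩ := hb
        have : (⟨va.1, Set.mem_toFinset.mp va.2⟩ : t) = ⟨vb.1, Set.mem_toFinset.mp vb.2⟩ := by
          apply Subtype.ext
          rw [← hg2 ⟨va.1, Set.mem_toFinset.mp va.2⟩, ← hg2 ⟨vb.1, Set.mem_toFinset.mp vb.2⟩, hab]
        apply Subtype.ext
        exact congrArg g this
      have : (fun i : T => B i.1) = (fun v : t => (v : Fin m → ℝ)) ∘
          (fun i : T => (⟨B i.1, hmem i⟩ : t)) := rfl
      rw [this]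
      exact htli.comp _ einj
  · -- span ≠ ⊤ : find nonzero direction in recession cone, contradiction
    exfalso
    obtain ⟨φ, hφne, hφbot⟩ := Submodule.exists_dual_map_eq_bot_of_lt_top
      (lt_top_iff_ne_top.mpr hspan) inferInstance
    set y : Fin m → ℝ := fun j => φ (Pi.single j 1) with hy
    have hφeq : ∀ z : Fin m → ℝ, φ z = z ⬝ᵥ y := by
      intro z
      have hz : z = ∑ j, Pi.single j (z j) := (Finset.univ_sum_single z).symm
      conv_lhs => rw [hz]
      rw [map_sum]
      rw [dotProduct]
      refine Finset.sum_congr rfl fun j _ => ?_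
      have : (Pi.single j (z j) : Fin m → ℝ) = z j • (Pi.single j 1 : Fin m → ℝ) := by
        rw [← Pi.single_smul, smul_eq_mul, mul_one]
      rw [this, _root_.map_smul, smul_eq_mul, hy]
    have hyne : y ≠ 0 := by
      intro h
      refine hφne (LinearMap.ext fun z => ?_)
      rw [hφeq z, h]
      simp
    have hrow : ∀ j ∉ σ, B.mulVec y j = 0 := by
      intro j hj
      have hBj : B j ∈ Submodule.span ℝ s := Submodule.subset_span ⟨j, hj, rfl⟩
      have : φ (B j) = 0 := by
        have : φ (B j) ∈ Submodule.map φ (Submodule.span ℝ s) := ⟨B j, hBj, rfl⟩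
        rw [hφbot] at this
        simpa using this
      rw [Matrix.mulVec, ← hφeq]
      exact this
    -- choose sign
    obtain ⟨y', hy'ne, hy'row, hy'w⟩ :
        ∃ y' : Fin m → ℝ, y' ≠ 0 ∧ (∀ j ∉ σ, B.mulVec y' j = 0) ∧ 0 ≤ w ⬝ᵥ B.mulVec y' := by
      rcases le_total 0 (w ⬝ᵥ B.mulVec y) with h | h
      · exact ⟨y, hyne, hrow, h⟩
      · refine ⟨-y, neg_ne_zero.mpr hyne, fun j hj => ?_, ?_⟩
        · rw [Matrix.mulVec_neg, Pi.neg_apply, hrow j hj, neg_zero]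
        · rw [Matrix.mulVec_neg, dotProduct_neg]
          linarith
    obtain ⟨R, hR⟩ := hbdd.subset_closedBall 0
    have hmem : ∀ t : ℝ, 0 ≤ t → (t • y') ∈
        {y : Fin m → ℝ | (∀ j ∉ σ, B.mulVec y j ≤ η j) ∧ -(w ⬝ᵥ B.mulVec y) ≤ 0} := by
      intro t ht
      constructor
      · intro j hj
        rw [Matrix.mulVec_smul, Pi.smul_apply, hy'row j hj, smul_zero]
        exact Nat.cast_nonneg _
      · rw [Matrix.mulVec_smul, dotProduct_smul, smul_eq_mul, neg_nonpos]
        positivity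
    have hnorm : ∀ t : ℝ, 0 ≤ t → ‖t • y'‖ ≤ R := by
      intro t ht
      have := hR (hmem t ht)
      simpa [Metric.mem_closedBall] using this
    have hy'pos : 0 < ‖y'‖ := norm_pos_iff.mpr hy'ne
    set t := (|R| + 1) / ‖y'‖ with htdef
    have htpos : 0 < t := div_pos (by positivity) hy'pos
    have := hnorm t htpos.le
    rw [norm_smul, Real.norm_eq_abs, abs_of_pos htpos] at this
    have h3 : t * ‖y'‖ = |R| + 1 := div_mul_cancel₀ _ hy'pos.ne'
    have := le_abs_self R
    linarith
end

section
/- Let c¹,…,c^{m+2} ∈ ℝ^m. An index i has the property that the configuration {cʲ : j ≠ i} is totally cyclic (i.e., there is a linear dependence ∑_{j≠i} λ_j cʲ = 0 with all λ_j > 0) only if, in a Gale dual configuration {b₁,…,b_{m+2}} ⊂ ℝ², the vector b_i spans an extreme ray, i.e., there exists c' ∈ ℝ² with c'·b_i = 0 and c'·b_j > 0 for all j ≠ i. Since a vector configuration in ℝ² has at most two extreme rays, at most two indices i can have this property. -/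
open Matrix

private lemma key_ineq (p q x1 y1 x2 y2 x3 y3 : ℝ)
    (h0 : p * x1 + q * y1 = 0) (h2 : 0 < p * x2 + q * y2) (h3 : 0 < p * x3 + q * y3)
    (hv : 0 < x1 ^ 2 + y1 ^ 2) :
    0 < (x1 * y2 - x2 * y1) * (x1 * y3 - x3 * y1) := by
  have hpq : 0 < p ^ 2 + q ^ 2 := by
    rcases lt_trichotomy (p ^ 2 + q ^ 2) 0 with h | h | h
    · nlinarith [sq_nonneg p, sq_nonneg q]
    · have hp : p = 0 := by nlinarith [sq_nonneg p, sq_nonneg q]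
      have hq : q = 0 := by nlinarith [sq_nonneg p, sq_nonneg q]
      rw [hp, hq] at h2; linarith
    · exact h
  have hid : (p * x2 + q * y2) * (p * x3 + q * y3) * (x1 ^ 2 + y1 ^ 2)
      = (x1 * y2 - x2 * y1) * (x1 * y3 - x3 * y1) * (p ^ 2 + q ^ 2) := by
    linear_combination (p * (x1 * x2 * x3 - x1 * y2 * y3 + y1 * y2 * x3 + y1 * x2 * y3)
      + q * (x1 * y2 * x3 + x1 * x2 * y3 + y1 * y2 * y3 - y1 * x2 * x3)) * h0
  nlinarith [mul_pos (mul_pos h2 h3) hv]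

private lemma vec_ne_zero (p q x y : ℝ) (h : 0 < p * x + q * y) : 0 < x ^ 2 + y ^ 2 := by
  rcases lt_trichotomy (x ^ 2 + y ^ 2) 0 with h' | h' | h'
  · nlinarith [sq_nonneg x, sq_nonneg y]
  · have hx : x = 0 := by nlinarith [sq_nonneg x, sq_nonneg y]
    have hy : y = 0 := by nlinarith [sq_nonneg x, sq_nonneg y]
    rw [hx, hy] at h; linarith
  · exact h'

/-- Gale duality for a configuration of `m+2` vectors in `ℝ^m`:
if deleting the `i`-th vector leaves a totally cyclic configuration, then in the
Gale dual configuration `b` in `ℝ²` the vector `b_i` spans an extreme ray; and at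
most two indices can have this property. -/
theorem stmt3 (m : ℕ) (c : Fin (m + 2) → Fin m → ℝ) (b : Fin (m + 2) → Fin 2 → ℝ)
    (hGale : ∀ lam : Fin (m + 2) → ℝ,
      (∑ j, lam j • c j = 0) ↔ ∃ μ : Fin 2 → ℝ, ∀ j, lam j = ∑ s, μ s * b j s) :
    (∀ i : Fin (m + 2),
      (∃ lam : Fin (m + 2) → ℝ, (∀ j, j ≠ i → 0 < lam j) ∧
          ∑ j ∈ Finset.univ.erase i, lam j • c j = 0) →
      ∃ c' : Fin 2 → ℝ, c' ⬝ᵥ b i = 0 ∧ ∀ j, j ≠ i → 0 < c' ⬝ᵥ b j) ∧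
    {i : Fin (m + 2) | ∃ lam : Fin (m + 2) → ℝ, (∀ j, j ≠ i → 0 < lam j) ∧
        ∑ j ∈ Finset.univ.erase i, lam j • c j = 0}.ncard ≤ 2 := by
  have part1 : ∀ i : Fin (m + 2),
      (∃ lam : Fin (m + 2) → ℝ, (∀ j, j ≠ i → 0 < lam j) ∧
          ∑ j ∈ Finset.univ.erase i, lam j • c j = 0) →
      ∃ c' : Fin 2 → ℝ, c' ⬝ᵥ b i = 0 ∧ ∀ j, j ≠ i → 0 < c' ⬝ᵥ b j := by
    intro i ⟨lam, hpos, hsum⟩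
    let lam' : Fin (m + 2) → ℝ := fun j => if j = i then 0 else lam j
    have hsum' : ∑ j, lam' j • c j = 0 := by
      rw [← Finset.sum_erase_add _ _ (Finset.mem_univ i)]
      have h1 : ∑ j ∈ Finset.univ.erase i, lam' j • c j
          = ∑ j ∈ Finset.univ.erase i, lam j • c j := by
        refine Finset.sum_congr rfl fun j hj => ?_
        simp only [lam', if_neg (Finset.ne_of_mem_erase hj)]
      have h2 : lam' i • c i = 0 := by simp [lam']
      rw [h1, hsum, h2, add_zero]
    obtain ⟨μ, hμ⟩ := (hGale lam').mp hsum'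
    refine ⟨μ, ?_, ?_⟩
    · have h := hμ i
      simp only [lam', if_pos rfl] at h
      simp only [dotProduct]
      exact h.symm
    · intro j hj
      have h := hμ j
      simp only [lam', if_neg hj] at h
      simp only [dotProduct]
      rw [← h]
      exact hpos j hj
  refine ⟨part1, ?_⟩
  by_contra hcard
  push_neg at hcard
  have h3 : 3 ≤ _ := hcard
  obtain ⟨t, hts, ht3⟩ := Set.exists_subset_card_eq h3
  obtain ⟨a1, a2, a3, h12, h13, h23, rfl⟩ := Set.ncard_eq_three.mp ht3
  obtain ⟨μ1, hμ1z, hμ1p⟩ := part1 a1 (hts (by simp))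
  obtain ⟨μ2, hμ2z, hμ2p⟩ := part1 a2 (hts (by simp))
  obtain ⟨μ3, hμ3z, hμ3p⟩ := part1 a3 (hts (by simp))
  -- coordinates
  set x1 := b a1 0; set y1 := b a1 1
  set x2 := b a2 0; set y2 := b a2 1
  set x3 := b a3 0; set y3 := b a3 1
  have dp : ∀ (μ : Fin 2 → ℝ) (j : Fin (m + 2)), μ ⬝ᵥ b j = μ 0 * b j 0 + μ 1 * b j 1 := by
    intro μ j; simp [dotProduct, Fin.sum_univ_two]
  have e11 : μ1 0 * x1 + μ1 1 * y1 = 0 := by rw [← dp]; exact hμ1z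
  have e12 : 0 < μ1 0 * x2 + μ1 1 * y2 := by rw [← dp]; exact hμ1p a2 h12.symm
  have e13 : 0 < μ1 0 * x3 + μ1 1 * y3 := by rw [← dp]; exact hμ1p a3 h13.symm
  have e22 : μ2 0 * x2 + μ2 1 * y2 = 0 := by rw [← dp]; exact hμ2z
  have e21 : 0 < μ2 0 * x1 + μ2 1 * y1 := by rw [← dp]; exact hμ2p a1 h12
  have e23 : 0 < μ2 0 * x3 + μ2 1 * y3 := by rw [← dp]; exact hμ2p a3 h23.symm
  have e33 : μ3 0 * x3 + μ3 1 * y3 = 0 := by rw [← dp]; exact hμ3z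
  have e31 : 0 < μ3 0 * x1 + μ3 1 * y1 := by rw [← dp]; exact hμ3p a1 h13
  have e32 : 0 < μ3 0 * x2 + μ3 1 * y2 := by rw [← dp]; exact hμ3p a2 h23
  have hv1 : 0 < x1 ^ 2 + y1 ^ 2 := vec_ne_zero _ _ _ _ e21
  have hv2 : 0 < x2 ^ 2 + y2 ^ 2 := vec_ne_zero _ _ _ _ e12
  have hv3 : 0 < x3 ^ 2 + y3 ^ 2 := vec_ne_zero _ _ _ _ e13
  have k1 := key_ineq _ _ _ _ _ _ _ _ e11 e12 e13 hv1
  have k2 := key_ineq _ _ _ _ _ _ _ _ e22 e21 e23 hv2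
  have k3 := key_ineq _ _ _ _ _ _ _ _ e33 e31 e32 hv3
  -- k1 : 0 < A * B, k2 : 0 < (-A) * C, k3 : 0 < (-B) * (-C) with
  -- A = x1*y2 - x2*y1, B = x1*y3 - x3*y1, C = x2*y3 - x3*y2
  nlinarith [mul_pos k1 k3, mul_pos k1 k2, mul_pos k2 k3, sq_nonneg (x1*y3 - x3*y1)]
end
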